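/- arXiv:1606.05422 — 6 statements merged into one kernel-verified Lean document; each statement's English description precedes it below -/
import Mathlib

section
/- Let f be a polynomial over ℂ with natDegree f = d, where d ≥ 2, viewed as the map z ↦ f.eval z on ℂ. Then there exists R > 0 such that for every z ∈ ℂ with ‖z‖ ≥ R and every n ∈ ℕ, one has ‖f^[n](z)‖ ≥ 2^n·‖z‖ and ‖(deriv (f^[n]))(z)‖ ≥ 2^n. -/
open Polynomial Filter

theorem stmt_6 (f : Polynomial ℂ) (d : ℕ) (hd : 2 ≤ d) (hdeg : f.natDegree = d) :
    ∃ R > (0 : ℝ), ∀ z : ℂ, R ≤ ‖z‖ → ∀ n : ℕ,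
      (2 : ℝ) ^ n * ‖z‖ ≤ ‖(fun z => f.eval z)^[n] z‖ ∧
      (2 : ℝ) ^ n ≤ ‖deriv ((fun z => f.eval z)^[n]) z‖ := by
  -- factor f - f(0) = X * g
  have hdvd : (X : ℂ[X]) ∣ (f - C (f.eval 0)) := by
    have := (dvd_iff_isRoot (p := f - C (f.eval 0)) (a := 0)).2 (by simp [IsRoot])
    simpa using this
  obtain ⟨g, hg⟩ := hdvd
  have hfC : f ≠ C (f.eval 0) := by
    intro h
    have : f.natDegree = 0 := by rw [h]; exact natDegree_C _
    omega
  have hg0 : g ≠ 0 := by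
    intro h
    apply hfC
    have : f - C (f.eval 0) = 0 := by rw [hg, h, mul_zero]
    linear_combination this
  have hgdeg : g.natDegree = d - 1 := by
    have h1 : (f - C (f.eval 0)).natDegree = d := by rw [natDegree_sub_C, hdeg]
    rw [hg, natDegree_X_mul hg0] at h1
    omega
  have hgpos : 0 < g.degree := by
    rw [← natDegree_pos_iff_degree_pos, hgdeg]; omega
  -- derivative has positive degree
  have hderivpos : 0 < f.derivative.degree := by
    rw [← natDegree_pos_iff_degree_pos]
    have hcoeff : f.derivative.coeff (d - 1) ≠ 0 := by
      rw [coeff_derivative]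
      have h1 : d - 1 + 1 = d := by omega
      rw [h1]
      have hlc : f.coeff d ≠ 0 := by
        rw [← hdeg]; exact mt leadingCoeff_eq_zero.1 (fun h => by
          simp [h] at hdeg; omega)
      have : ((d - 1 : ℕ) : ℂ) + 1 ≠ 0 := by
        have : (((d - 1 : ℕ) : ℂ) + 1) = ((d - 1 + 1 : ℕ) : ℂ) := by push_cast; ring
        rw [this]
        exact Nat.cast_ne_zero.2 (by omega)
      exact mul_ne_zero hlc this
    have := le_natDegree_of_ne_zero hcoeff
    omega
  -- eventual bounds along comap norm atTop
  set L : Filter ℂ := Filter.comap (fun z : ℂ => ‖z‖) atTop with hL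
  have hten : Tendsto (fun z : ℂ => ‖z‖) L atTop := tendsto_comap
  have h1 : ∀ᶠ z : ℂ in L, 3 ≤ ‖g.eval z‖ :=
    (g.tendsto_norm_atTop hgpos hten).eventually_ge_atTop 3
  have h2 : ∀ᶠ z : ℂ in L, 2 ≤ ‖f.derivative.eval z‖ :=
    (f.derivative.tendsto_norm_atTop hderivpos hten).eventually_ge_atTop 2
  have h3 : ∀ᶠ z : ℂ in L, ‖f.eval 0‖ ≤ ‖z‖ := hten.eventually_ge_atTop _
  obtain ⟨R₀, hR₀⟩ := eventually_atTop.1 (Filter.eventually_comap.1 ((h1.and h2).and h3))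
  refine ⟨max R₀ 1, lt_of_lt_of_le one_pos (le_max_right _ _), ?_⟩
  intro z hz n
  have hRz : ∀ w : ℂ, max R₀ 1 ≤ ‖w‖ →
      (3 ≤ ‖g.eval w‖ ∧ 2 ≤ ‖f.derivative.eval w‖) ∧ ‖f.eval 0‖ ≤ ‖w‖ := by
    intro w hw
    exact hR₀ ‖w‖ (le_trans (le_max_left _ _) hw) w rfl
  -- key: for ‖w‖ ≥ max R₀ 1, ‖f w‖ ≥ 2‖w‖
  have key : ∀ w : ℂ, max R₀ 1 ≤ ‖w‖ → 2 * ‖w‖ ≤ ‖f.eval w‖ := by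
    intro w hw
    obtain ⟨⟨hg3, _⟩, hc⟩ := hRz w hw
    have hw1 : (1 : ℝ) ≤ ‖w‖ := le_trans (le_max_right _ _) hw
    have heq : f.eval w - f.eval 0 = w * g.eval w := by
      have := congrArg (eval w) hg
      simpa using this
    have hnorm : ‖w‖ * ‖g.eval w‖ ≤ ‖f.eval w‖ + ‖f.eval 0‖ := by
      calc ‖w‖ * ‖g.eval w‖ = ‖w * g.eval w‖ := (norm_mul _ _).symm
        _ = ‖f.eval w - f.eval 0‖ := by rw [heq]
        _ ≤ ‖f.eval w‖ + ‖f.eval 0‖ := norm_sub_le _ _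
    nlinarith
  -- induction on n
  induction n with
  | zero =>
    constructor
    · simp
    · simp only [Function.iterate_zero]
      rw [deriv_id']
      simp
  | succ n ih =>
    obtain ⟨ih1, ih2⟩ := ih
    have hz1 : max R₀ 1 ≤ ‖z‖ := hz
    have h2n : (1 : ℝ) ≤ 2 ^ n := one_le_pow₀ (by norm_num)
    have hzn : ‖z‖ ≤ 2 ^ n * ‖z‖ := le_mul_of_one_le_left (norm_nonneg _) h2n
    have hw : max R₀ 1 ≤ ‖(fun z => f.eval z)^[n] z‖ :=
      le_trans (le_trans hz1 hzn) ih1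
    constructor
    · rw [Function.iterate_succ_apply']
      calc (2 : ℝ) ^ (n + 1) * ‖z‖ = 2 * (2 ^ n * ‖z‖) := by ring
        _ ≤ 2 * ‖(fun z => f.eval z)^[n] z‖ := by linarith
        _ ≤ ‖f.eval ((fun z => f.eval z)^[n] z)‖ := key _ hw
    · rw [Function.iterate_succ']
      have hdiff : DifferentiableAt ℂ (fun z => f.eval z)^[n] z :=
        (f.differentiable.iterate n) z
      rw [deriv_comp z f.differentiableAt hdiff, norm_mul]
      have hd2 : 2 ≤ ‖deriv (fun z => f.eval z) ((fun z => f.eval z)^[n] z)‖ := by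
        rw [Polynomial.deriv]
        exact (hRz _ hw).1.2
      calc (2 : ℝ) ^ (n + 1) = 2 * 2 ^ n := by ring
        _ ≤ ‖deriv (fun z => f.eval z) ((fun z => f.eval z)^[n] z)‖ *
            ‖deriv (fun z => f.eval z)^[n] z‖ := by
          apply mul_le_mul hd2 ih2 (by positivity)
          exact le_trans (by norm_num) hd2
end

section
/- Let f be a polynomial over ℂ viewed as the map z ↦ f.eval z on ℂ, let U ⊆ ℂ be open and a ∈ ℂ, and suppose the sequence of iterates (f^[n])_{n} converges locally uniformly on U to the constant function a. Then for every λ ∈ ℂ with λ ≠ 0 and every compact set V ⊆ U, there exists N such that for all n ≥ N and all w ∈ V, (deriv (f^[n]))(w) ≠ λ. -/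
open Polynomial Filter

theorem TendstoUniformlyOn.eventually_forall_ne_of_tendsto_zero {ι α E : Type*}
    [NormedAddCommGroup E] {l : Filter ι} {F : ι → α → E} {V : Set α}
    (h : TendstoUniformlyOn F 0 l V) {c : E} (hc : c ≠ 0) :
    ∀ᶠ n in l, ∀ w ∈ V, F n w ≠ c := by
  filter_upwards [Metric.tendstoUniformlyOn_iff.1 h ‖c‖ (norm_pos_iff.2 hc)] with n hn w hw hFc
  simpa [hFc] using hn w hw

theorem TendstoLocallyUniformlyOn.deriv_tendsto_zero_of_tendsto_const {ι E : Type*}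
    [NormedAddCommGroup E] [NormedSpace ℂ E] [CompleteSpace E] {l : Filter ι}
    {F : ι → ℂ → E} {U : Set ℂ} {a : E} (h : TendstoLocallyUniformlyOn F (fun _ => a) l U)
    (hF : ∀ᶠ n in l, DifferentiableOn ℂ (F n) U) (hU : IsOpen U) :
    TendstoLocallyUniformlyOn (_root_.deriv ∘ F) 0 l U := by
  have := h.deriv hF hU
  rwa [deriv_const'] at this

theorem stmt_7 (f : Polynomial ℂ) (U : Set ℂ) (hU : IsOpen U) (a : ℂ)
    (hconv : TendstoLocallyUniformlyOn (fun n => (fun z => f.eval z)^[n])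
      (fun _ => a) atTop U) :
    ∀ lam : ℂ, lam ≠ 0 → ∀ V : Set ℂ, IsCompact V → V ⊆ U →
      ∃ N : ℕ, ∀ n ≥ N, ∀ w ∈ V, deriv ((fun z => f.eval z)^[n]) w ≠ lam := by
  intro lam hlam V hV hVU
  have hderiv := hconv.deriv_tendsto_zero_of_tendsto_const
    (.of_forall fun n => (f.differentiable.iterate n).differentiableOn) hU
  have hunif := (tendstoLocallyUniformlyOn_iff_forall_isCompact hU).1 hderiv V hVU hV
  exact eventually_atTop.1 (hunif.eventually_forall_ne_of_tendsto_zero hlam)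
end

section
/- Let z₀ ∈ ℂ, r > 0, and let h : ℂ → ℂ be holomorphic on the closed ball of center z₀ and radius r (i.e., DifferentiableOn ℂ h (Metric.closedBall z₀ r)). Suppose there exists a ∈ Metric.ball z₀ r with h(a) = 0, and let λ ∈ ℂ satisfy 2‖λ‖ < ‖h(w)‖ for every w ∈ Metric.sphere z₀ r. Then there exists x ∈ Metric.ball z₀ r with h(x) = λ. -/
open Set Filter Metric Complex
open scoped Topology

theorem stmt_8 (z₀ : ℂ) (r : ℝ) (hr : 0 < r) (h : ℂ → ℂ)
    (hh : DifferentiableOn ℂ h (Metric.closedBall z₀ r))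
    (hzero : ∃ a ∈ Metric.ball z₀ r, h a = 0)
    (lam : ℂ) (hlam : ∀ w ∈ Metric.sphere z₀ r, 2 * ‖lam‖ < ‖h w‖) :
    ∃ x ∈ Metric.ball z₀ r, h x = lam := by
  obtain ⟨a, ha, ha0⟩ := hzero
  by_contra hcon
  push_neg at hcon
  set g : ℂ → ℂ := fun z => h z - lam with hg
  have hgd : DifferentiableOn ℂ g (Metric.closedBall z₀ r) := hh.sub_const lam
  have hcont : ContinuousOn (fun z => ‖g z‖) (Metric.closedBall z₀ r) :=
    continuous_norm.comp_continuousOn hgd.continuousOn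
  have hga : ‖g a‖ = ‖lam‖ := by simp [hg, ha0]
  have hsphere : ∀ w ∈ Metric.sphere z₀ r, ‖lam‖ < ‖g w‖ := by
    intro w hw
    have h1 := hlam w hw
    have h2 := norm_sub_norm_le (h w) lam
    have : ‖g w‖ = ‖h w - lam‖ := rfl
    linarith
  obtain ⟨z, hz1, hz2⟩ : ∃ z ∈ Metric.ball z₀ r, IsLocalMin (fun z => ‖g z‖) z := by
    refine Metric.exists_isLocalMin_mem_ball hcont (Metric.ball_subset_closedBall ha) ?_
    intro w hw
    have := hsphere w hw
    simpa [hga] using this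
  have hgd' : DifferentiableOn ℂ g (Metric.ball z₀ r) :=
    hgd.mono Metric.ball_subset_closedBall
  have h6 : ∀ᶠ w in 𝓝 z, DifferentiableAt ℂ g w :=
    hgd'.eventually_differentiableAt (isOpen_ball.mem_nhds hz1)
  have hz2' : IsLocalMin (norm ∘ g) z := hz2
  rcases eventually_eq_or_eq_zero_of_isLocalMin_norm h6 hz2' with hkey | hkey
  · -- g is locally constant near z, hence constant on the ball by the identity theorem
    have h3 : AnalyticOnNhd ℂ g (Metric.ball z₀ r) := hgd'.analyticOnNhd isOpen_ball
    have h7 : ∃ᶠ w in 𝓝[≠] z, g w = g z := (hkey.filter_mono nhdsWithin_le_nhds).frequently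
    have h8 : IsPreconnected (Metric.ball z₀ r) := (convex_ball z₀ r).isPreconnected
    have h9 : EqOn g (fun _ => g z) (Metric.ball z₀ r) :=
      h3.eqOn_of_preconnected_of_frequently_eq analyticOnNhd_const h8 hz1 h7
    -- g equals the constant g z = g a = -lam on the ball; extend to the sphere by continuity
    have hgz : g z = -lam := by
      have := h9 ha
      simp only [hg] at this ⊢
      rw [← this, ha0, zero_sub]
    -- pick a point of the sphere
    obtain ⟨w, hw⟩ : (Metric.sphere z₀ r).Nonempty := NormedSpace.sphere_nonempty.mpr hr.le
    have hwcb : w ∈ Metric.closedBall z₀ r := Metric.sphere_subset_closedBall hw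
    have hwcl : w ∈ closure (Metric.ball z₀ r) := by
      rw [closure_ball z₀ hr.ne']; exact hwcb
    have hnb : (𝓝[Metric.ball z₀ r] w).NeBot := mem_closure_iff_nhdsWithin_neBot.mp hwcl
    have hcw : ContinuousWithinAt g (Metric.ball z₀ r) w :=
      (hgd.continuousOn w hwcb).mono Metric.ball_subset_closedBall
    have hlim : Tendsto g (𝓝[Metric.ball z₀ r] w) (𝓝 (-lam)) := by
      refine Tendsto.congr' ?_ tendsto_const_nhds
      filter_upwards [self_mem_nhdsWithin] with x hx
      rw [h9 hx, hgz]
    have hgw : g w = -lam := tendsto_nhds_unique hcw hlim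
    have : ‖g w‖ = ‖lam‖ := by rw [hgw, norm_neg]
    exact absurd (hsphere w hw) (by rw [this]; exact lt_irrefl _)
  · -- g z = 0 means h z = lam, contradicting hcon
    exact hcon z hz1 (sub_eq_zero.mp hkey)
end

section
/- For c ∈ ℂ, let p_c : ℂ → ℂ be the quadratic polynomial p_c(z) = z² + c, and let p_c^[n] denote its n-th iterate. For every n ≥ 1 there exists a polynomial q ∈ ℂ[X] with natDegree q = 2^n − 1 and leading coefficient 2^n such that q.eval c = (deriv (p_c^[n]))(c) for every c ∈ ℂ. -/
/-!
Writing `f_c z = z ^ 2 + c`, the chain rule gives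
`(f_cⁿ)'(c) = ∏_{k<n} 2 f_cᵏ(c) = 2ⁿ ∏_{k<n} f_cᵏ(c)`, and `c ↦ f_cᵏ(c)` is a monic polynomial of
degree `2ᵏ`. So `(f_cⁿ)'(c)` is `2ⁿ` times a monic polynomial of degree `∑_{k<n} 2ᵏ = 2ⁿ - 1`.
-/

open Polynomial Finset

theorem hasDerivAt_iterate_of_forall_hasDerivAt {𝕜 : Type*} [NontriviallyNormedField 𝕜]
    {f f' : 𝕜 → 𝕜} (hf : ∀ x, HasDerivAt f (f' x) x) (n : ℕ) (x : 𝕜) :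
    HasDerivAt f^[n] (∏ k ∈ range n, f' (f^[k] x)) x := by
  induction n with
  | zero => simpa using hasDerivAt_id x
  | succ n ih =>
    rw [Function.iterate_succ', prod_range_succ, mul_comm]
    exact (hf _).comp x ih

namespace Polynomial

variable (R : Type*) [CommSemiring R]

noncomputable def critOrbit : ℕ → R[X]
  | 0 => X
  | n + 1 => critOrbit n ^ 2 + X

noncomputable def critOrbitDeriv (n : ℕ) : R[X] :=
  C (2 ^ n) * ∏ k ∈ range n, critOrbit R k

variable {R}

theorem eval_critOrbit (n : ℕ) (c : R) :
    (critOrbit R n).eval c = (fun z : R => z ^ 2 + c)^[n] c := by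
  induction n with
  | zero => simp [critOrbit]
  | succ n ih => simp [critOrbit, Function.iterate_succ_apply', ih]

theorem eval_critOrbitDeriv (n : ℕ) (c : R) :
    (critOrbitDeriv R n).eval c = ∏ k ∈ range n, 2 * (fun z : R => z ^ 2 + c)^[k] c := by
  simp [critOrbitDeriv, eval_prod, eval_critOrbit, prod_mul_distrib]

theorem monic_critOrbit_and_natDegree [Nontrivial R] (n : ℕ) :
    (critOrbit R n).Monic ∧ (critOrbit R n).natDegree = 2 ^ n := by
  induction n with
  | zero => exact ⟨monic_X, natDegree_X⟩
  | succ n ih =>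
    obtain ⟨hmonic, hdeg⟩ := ih
    have hsq : (critOrbit R n ^ 2).natDegree = 2 ^ (n + 1) := by
      rw [hmonic.natDegree_pow, hdeg, pow_succ, mul_comm]
    have hlt : (X : R[X]).natDegree < (critOrbit R n ^ 2).natDegree := by
      rw [natDegree_X, hsq]
      exact Nat.one_lt_two_pow (Nat.succ_ne_zero n)
    exact ⟨(hmonic.pow 2).add_of_left (degree_lt_degree hlt),
      (natDegree_add_eq_left_of_natDegree_lt hlt).trans hsq⟩

theorem monic_critOrbit [Nontrivial R] (n : ℕ) : (critOrbit R n).Monic :=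
  (monic_critOrbit_and_natDegree n).1

theorem natDegree_critOrbit [Nontrivial R] (n : ℕ) : (critOrbit R n).natDegree = 2 ^ n :=
  (monic_critOrbit_and_natDegree n).2

theorem monic_prod_critOrbit [Nontrivial R] (n : ℕ) : (∏ k ∈ range n, critOrbit R k).Monic :=
  monic_prod_of_monic _ _ fun k _ ↦ monic_critOrbit k

theorem natDegree_critOrbitDeriv {n : ℕ} (h : (2 : R) ^ n ≠ 0) :
    (critOrbitDeriv R n).natDegree = 2 ^ n - 1 := by
  have : Nontrivial R := ⟨⟨_, _, h⟩⟩
  rw [critOrbitDeriv,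
    natDegree_C_mul_of_mul_ne_zero (by rwa [(monic_prod_critOrbit n).leadingCoeff, mul_one]),
    natDegree_prod_of_monic _ _ fun k _ ↦ monic_critOrbit k]
  simp only [natDegree_critOrbit]
  simpa using Nat.geomSum_eq le_rfl n

theorem leadingCoeff_critOrbitDeriv [Nontrivial R] (n : ℕ) :
    (critOrbitDeriv R n).leadingCoeff = 2 ^ n :=
  (monic_prod_critOrbit n).leadingCoeff_C_mul _

end Polynomial

theorem stmt_11_general (n : ℕ) :
    ∃ q : Polynomial ℂ, q.natDegree = 2 ^ n - 1 ∧ q.leadingCoeff = (2 : ℂ) ^ n ∧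
      ∀ c : ℂ, q.eval c = deriv ((fun z : ℂ => z ^ 2 + c)^[n]) c := by
  refine ⟨critOrbitDeriv ℂ n, natDegree_critOrbitDeriv (pow_ne_zero n two_ne_zero),
    leadingCoeff_critOrbitDeriv n, fun c ↦ ?_⟩
  have hf (z : ℂ) : HasDerivAt (fun z : ℂ => z ^ 2 + c) (2 * z) z := by
    simpa using (hasDerivAt_pow 2 z).add_const c
  rw [(hasDerivAt_iterate_of_forall_hasDerivAt hf n c).deriv, eval_critOrbitDeriv]

theorem stmt_11 (n : ℕ) (hn : 1 ≤ n) :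
    ∃ q : Polynomial ℂ, q.natDegree = 2 ^ n - 1 ∧ q.leadingCoeff = (2 : ℂ) ^ n ∧
      ∀ c : ℂ, q.eval c = deriv ((fun z : ℂ => z ^ 2 + c)^[n]) c :=
  stmt_11_general n
end

section
/- For c ∈ ℂ, let p_c : ℂ → ℂ be the quadratic polynomial p_c(z) = z² + c, and let p_c^[n] denote its n-th iterate. For every R > 0 and every polynomial λ ∈ ℂ[X], there exists B ∈ ℝ such that for every n ≥ 1 and every c ∈ ℂ with ‖c‖ ≤ R, one has 2^{−n} · Real.log ‖(deriv (p_c^[n]))(c) − λ.eval c‖ ≤ B. -/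
/-!
By the chain rule, `(p_cⁿ)'(c) = ∏_{k<n} 2 p_cᵏ(c)`. For `‖c‖ ≤ R` the orbit of the critical
value grows at most like `‖p_cᵏ(c)‖ + 1 ≤ (R + 2)^(2ᵏ)`, so `‖(p_cⁿ)'(c)‖ ≤ (2(R + 2))^(2ⁿ)`.
Since `λ` is bounded on the disc `‖c‖ ≤ R`, `‖(p_cⁿ)'(c) - λ(c)‖ ≤ A^(2ⁿ)` for a constant `A ≥ 1`,
and taking `2⁻ⁿ log` gives the bound `log A`.
-/

open Polynomial

theorem hasDerivAt_iterate {𝕜 : Type*} [NontriviallyNormedField 𝕜] {f f' : 𝕜 → 𝕜}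
    (hf : ∀ z, HasDerivAt f (f' z) z) (n : ℕ) (z : 𝕜) :
    HasDerivAt f^[n] (∏ k ∈ Finset.range n, f' (f^[k] z)) z := by
  induction n with
  | zero => simpa using hasDerivAt_id z
  | succ n ih =>
    rw [Function.iterate_succ', Finset.prod_range_succ, mul_comm]
    exact (hf _).comp z ih

theorem Real.log_le_mul_log_of_abs_le_pow {x A : ℝ} {m : ℕ} (hA : 1 ≤ A) (hx : |x| ≤ A ^ m) :
    Real.log x ≤ m * Real.log A := by
  rcases eq_or_ne x 0 with rfl | hx0
  · simpa using mul_nonneg m.cast_nonneg (Real.log_nonneg hA)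
  · rw [← Real.log_abs, ← Real.log_pow]
    exact Real.log_le_log (abs_pos.mpr hx0) hx

section QuadraticFamily

variable {R : ℝ} {c : ℂ}

theorem deriv_iterate_sq_add (c z : ℂ) (n : ℕ) :
    deriv (fun w : ℂ => w ^ 2 + c)^[n] z =
      ∏ k ∈ Finset.range n, 2 * (fun w : ℂ => w ^ 2 + c)^[k] z := by
  refine (hasDerivAt_iterate (fun w => ?_) n z).deriv
  simpa using (hasDerivAt_pow 2 w).add_const c

theorem norm_iterate_sq_add_add_one_le (hc : ‖c‖ ≤ R) (k : ℕ) :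
    ‖(fun w : ℂ => w ^ 2 + c)^[k] c‖ + 1 ≤ (R + 2) ^ 2 ^ k := by
  induction k with
  | zero =>
    simp only [Function.iterate_zero, id_eq, pow_zero, pow_one]
    linarith
  | succ k ih =>
    set a := ‖(fun w : ℂ => w ^ 2 + c)^[k] c‖
    have hstep : ‖(fun w : ℂ => w ^ 2 + c)^[k + 1] c‖ ≤ a ^ 2 + R := by
      rw [Function.iterate_succ_apply', ← norm_pow]
      exact (norm_add_le _ _).trans (by gcongr)
    have hgrowth : R + 2 ≤ (R + 2) ^ 2 ^ k :=
      le_self_pow₀ (by linarith [(norm_nonneg c).trans hc]) (Nat.two_pow_pos k).ne'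
    rw [pow_succ, pow_mul]
    nlinarith [norm_nonneg ((fun w : ℂ => w ^ 2 + c)^[k] c)]

theorem norm_deriv_iterate_sq_add_le (hc : ‖c‖ ≤ R) (n : ℕ) :
    ‖deriv (fun w : ℂ => w ^ 2 + c)^[n] c‖ ≤ (2 * (R + 2)) ^ 2 ^ n := by
  have hR : 0 ≤ R := (norm_nonneg c).trans hc
  have hfactor : ∀ k ∈ Finset.range n,
      ‖2 * (fun w : ℂ => w ^ 2 + c)^[k] c‖ ≤ (2 * (R + 2)) ^ 2 ^ k := by
    intro k _
    have htwo : (2 : ℝ) ≤ 2 ^ 2 ^ k := le_self_pow₀ one_le_two (Nat.two_pow_pos k).ne'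
    rw [norm_mul, Complex.norm_two, mul_pow]
    nlinarith [norm_iterate_sq_add_add_one_le hc k, pow_nonneg (by linarith : 0 ≤ R + 2) (2 ^ k)]
  have hexp : ∑ k ∈ Finset.range n, 2 ^ k ≤ 2 ^ n := by
    rw [Nat.geomSum_eq le_rfl, Nat.div_one]
    exact Nat.sub_le _ _
  calc ‖deriv (fun w : ℂ => w ^ 2 + c)^[n] c‖
      ≤ ∏ k ∈ Finset.range n, (2 * (R + 2)) ^ 2 ^ k := by
        rw [deriv_iterate_sq_add, norm_prod]
        exact Finset.prod_le_prod (fun _ _ => norm_nonneg _) hfactor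
    _ = (2 * (R + 2)) ^ ∑ k ∈ Finset.range n, 2 ^ k := Finset.prod_pow_eq_pow_sum _ _ _
    _ ≤ (2 * (R + 2)) ^ 2 ^ n := pow_le_pow_right₀ (by linarith) hexp

end QuadraticFamily

theorem stmt_12_general (R : ℝ) (lam : Polynomial ℂ) :
    ∃ B : ℝ, ∀ n : ℕ, 1 ≤ n → ∀ c : ℂ, ‖c‖ ≤ R →
      ((2 : ℝ) ^ n)⁻¹ *
        Real.log ‖deriv ((fun z : ℂ => z ^ 2 + c)^[n]) c - lam.eval c‖ ≤ B := by
  obtain ⟨L, hL⟩ := (isCompact_closedBall (0 : ℂ) R).exists_bound_of_continuousOn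
    lam.continuous.continuousOn
  set M := max L 1
  refine ⟨Real.log (2 * (R + 2) + M), fun n _ c hc => ?_⟩
  have hR : 0 ≤ R := (norm_nonneg c).trans hc
  have hlam : ‖lam.eval c‖ ≤ M ^ 2 ^ n :=
    (hL c (by simpa using hc)).trans <|
      (le_max_left L 1).trans (le_self_pow₀ (le_max_right L 1) (Nat.two_pow_pos n).ne')
  have hnorm : |‖deriv ((fun z : ℂ => z ^ 2 + c)^[n]) c - lam.eval c‖| ≤
      (2 * (R + 2) + M) ^ 2 ^ n := by
    rw [abs_norm]
    calc _ ≤ (2 * (R + 2)) ^ 2 ^ n + M ^ 2 ^ n :=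
          (norm_sub_le _ _).trans (add_le_add (norm_deriv_iterate_sq_add_le hc n) hlam)
      _ ≤ _ := pow_add_pow_le (by linarith) (by positivity) (Nat.two_pow_pos n).ne'
  rw [inv_mul_le_iff₀ (by positivity)]
  exact_mod_cast Real.log_le_mul_log_of_abs_le_pow
    (by linarith [le_max_right L 1]) hnorm

theorem stmt_12 (R : ℝ) (hR : 0 < R) (lam : Polynomial ℂ) :
    ∃ B : ℝ, ∀ n : ℕ, 1 ≤ n → ∀ c : ℂ, ‖c‖ ≤ R →
      ((2 : ℝ) ^ n)⁻¹ *
        Real.log ‖deriv ((fun z : ℂ => z ^ 2 + c)^[n]) c - lam.eval c‖ ≤ B :=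
  stmt_12_general R lam
end

section
/- For c ∈ ℂ, let p_c : ℂ → ℂ be the quadratic polynomial p_c(z) = z² + c, and let p_c^[n] denote its n-th iterate. Let g ∈ ℝ and suppose that ‖p_c^[n](c)‖ → ∞ as n → ∞ and that 2^{−n} · Real.log ‖p_c^[n](c)‖ → g as n → ∞. Then 2^{−n} · Real.log ‖(deriv (p_c^[n]))(c)‖ → g as n → ∞. -/
/-!
By the chain rule `(pⁿ)'(c) = ∏_{k<n} 2 pᵏ(c)`, and the orbit of `c` never meets the critical
point `0`: otherwise `c = p 0` would be periodic and its orbit bounded. Hence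
`log ‖(pⁿ)'(c)‖ = ∑_{k<n} (log 2 + log ‖pᵏ(c)‖)`, and `2⁻ⁿ` times this sum is a Cesàro mean of
`2⁻ᵏ (log 2 + log ‖pᵏ(c)‖) → g` with geometric weights `2ᵏ⁻ⁿ`, whose total `1 - 2⁻ⁿ` tends to `1`.
-/

open Filter Finset Asymptotics Topology

theorem Function.IsPeriodicPt.finite_range_iterate {α : Type*} {f : α → α} {x : α} {n : ℕ}
    (hx : Function.IsPeriodicPt f n x) (hn : 0 < n) : (Set.range fun k => f^[k] x).Finite := by
  refine ((Set.finite_Iio n).image fun k => f^[k] x).subset ?_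
  rintro _ ⟨k, rfl⟩
  exact ⟨k % n, Nat.mod_lt k hn, hx.iterate_mod_apply k⟩

theorem deriv_iterate_eq_prod {𝕜 : Type*} [NontriviallyNormedField 𝕜] {f : 𝕜 → 𝕜}
    (hf : Differentiable 𝕜 f) (n : ℕ) (x : 𝕜) :
    deriv f^[n] x = ∏ k ∈ range n, deriv f (f^[k] x) := by
  induction n generalizing x with
  | zero => simp
  | succ n ih =>
    rw [Function.iterate_succ, deriv_comp x ((hf.iterate n) (f x)) (hf x), ih, prod_range_succ']
    simp only [Function.iterate_succ_apply, Function.iterate_zero_apply]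

theorem tendsto_sum_range_div_sum_range_of_tendsto_div {a w : ℕ → ℝ} {l : ℝ}
    (hw : ∀ n, 0 < w n) (hW : Tendsto (fun n => ∑ i ∈ range n, w i) atTop atTop)
    (h : Tendsto (fun n => a n / w n) atTop (𝓝 l)) :
    Tendsto (fun n => (∑ i ∈ range n, a i) / ∑ i ∈ range n, w i) atTop (𝓝 l) := by
  have hdev : (fun n => a n - l * w n) =o[atTop] w := by
    have := (isBigO_refl w atTop).mul_isLittleO
      ((isLittleO_one_iff ℝ).2 (tendsto_sub_nhds_zero_iff.2 h))
    refine (this.congr_left fun n => ?_).congr_right fun n => mul_one _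
    field_simp [(hw n).ne']
  have hsum := (hdev.sum_range (fun n => (hw n).le) hW).tendsto_div_nhds_zero
  refine tendsto_sub_nhds_zero_iff.1 (hsum.congr' ?_)
  filter_upwards [hW.eventually_gt_atTop 0] with n hn
  rw [sum_sub_distrib, ← mul_sum]
  field_simp

theorem tendsto_inv_pow_mul_sum_range {a : ℕ → ℝ} {r l : ℝ} (hr : 1 < r)
    (h : Tendsto (fun n => (r ^ n)⁻¹ * a n) atTop (𝓝 l)) :
    Tendsto (fun n => (r ^ n)⁻¹ * ∑ i ∈ range n, a i) atTop (𝓝 (l / (r - 1))) := by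
  have hpow : Tendsto (fun n : ℕ => r ^ n) atTop atTop := tendsto_pow_atTop_atTop_of_one_lt hr
  have hgeom : ∀ n, ∑ i ∈ range n, r ^ i = (r ^ n - 1) / (r - 1) := fun n =>
    geom_sum_eq hr.ne' n
  have hW : Tendsto (fun n => ∑ i ∈ range n, r ^ i) atTop atTop := by
    simp only [hgeom]
    exact (tendsto_atTop_add_const_right _ (-1) hpow).atTop_div_const (sub_pos.2 hr)
  have hratio := tendsto_sum_range_div_sum_range_of_tendsto_div
    (fun n => pow_pos (zero_lt_one.trans hr) n) hW (by simpa only [inv_mul_eq_div] using h)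
  have hfactor : Tendsto (fun n : ℕ => (1 - (r ^ n)⁻¹) / (r - 1)) atTop (𝓝 (1 / (r - 1))) := by
    simpa using ((tendsto_inv_atTop_zero.comp hpow).const_sub 1).div_const (r - 1)
  refine (mul_one_div l (r - 1) ▸ hratio.mul hfactor).congr' ?_
  filter_upwards [eventually_gt_atTop 0] with n hn
  have hr1 : r - 1 ≠ 0 := (sub_pos.2 hr).ne'
  have hrn : r ^ n - 1 ≠ 0 := (sub_pos.2 (one_lt_pow₀ hr hn.ne')).ne'
  rw [hgeom]
  field_simp

theorem iterate_ne_zero_of_tendsto_norm_atTop {E : Type*} [Zero E] [Norm E] {f : E → E} {x : E}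
    (hf : f 0 = x) (hesc : Tendsto (fun n => ‖f^[n] x‖) atTop atTop) (k : ℕ) : f^[k] x ≠ 0 := by
  intro hk
  have hper : Function.IsPeriodicPt f (k + 1) x := by
    rw [Function.IsPeriodicPt, Function.IsFixedPt, Function.iterate_succ_apply', hk, hf]
  refine not_bddAbove_of_tendsto_atTop hesc ?_
  rw [Set.range_comp' norm]
  exact ((hper.finite_range_iterate k.succ_pos).image norm).bddAbove

theorem log_norm_deriv_iterate_of_eq_sq_add {c : ℂ} {p : ℂ → ℂ} (hp : ∀ z, p z = z ^ 2 + c)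
    (hnz : ∀ k, p^[k] c ≠ 0) (n : ℕ) :
    Real.log ‖deriv p^[n] c‖ = ∑ k ∈ range n, (Real.log 2 + Real.log ‖p^[k] c‖) := by
  obtain rfl : p = fun z => z ^ 2 + c := funext hp
  have hderiv : ∀ z, deriv (fun z : ℂ => z ^ 2 + c) z = 2 * z := fun z => by simp
  rw [deriv_iterate_eq_prod (by fun_prop), norm_prod,
    Real.log_prod fun k _ => by simp [hderiv, hnz k]]
  refine sum_congr rfl fun k _ => ?_
  rw [hderiv, norm_mul, Real.log_mul (by norm_num) (norm_ne_zero_iff.2 (hnz k))]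
  simp

theorem stmt_14 (c : ℂ) (p : ℂ → ℂ) (hp : ∀ z : ℂ, p z = z ^ 2 + c) (g : ℝ)
    (hesc : Tendsto (fun n : ℕ => ‖p^[n] c‖) atTop atTop)
    (hgreen : Tendsto (fun n : ℕ => ((2 : ℝ) ^ n)⁻¹ * Real.log ‖p^[n] c‖) atTop (nhds g)) :
    Tendsto (fun n : ℕ => ((2 : ℝ) ^ n)⁻¹ * Real.log ‖deriv (p^[n]) c‖) atTop (nhds g) := by
  have hnz := iterate_ne_zero_of_tendsto_norm_atTop (by simp [hp]) hesc
  have hterm : Tendsto (fun n => ((2 : ℝ) ^ n)⁻¹ * (Real.log 2 + Real.log ‖p^[n] c‖))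
      atTop (𝓝 g) := by
    have hdecay : Tendsto (fun n : ℕ => ((2 : ℝ) ^ n)⁻¹ * Real.log 2) atTop (𝓝 0) := by
      simpa using (tendsto_inv_atTop_zero.comp
        (tendsto_pow_atTop_atTop_of_one_lt one_lt_two)).mul_const (Real.log 2)
    simpa only [mul_add, zero_add] using hdecay.add hgreen
  have hsum := tendsto_inv_pow_mul_sum_range one_lt_two hterm
  rw [show (2 : ℝ) - 1 = 1 by norm_num, div_one] at hsum
  simpa only [log_norm_deriv_iterate_of_eq_sq_add hp hnz] using hsum
end
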